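/- Let U(5) act on ℂ⁵ by ρ(g)w := det(g)·(ḡ w), where ḡ is the entrywise complex conjugate of g. Then (i) the subspace of w ∈ ℂ⁵ with ρ(h)w = w for every h = diag(A, B, c) with A, B ∈ SU(2) and |c| = 1 equals the one-dimensional span ℂ·e₅; and (ii) for the matrix g ∈ U(5) determined by ge₁ = e₃, ge₂ = −e₄, ge₃ = e₁, ge₄ = e₂, ge₅ = e₅ one has ρ(g)e₅ = −e₅; consequently no nonzero vector of ℂ⁵ is fixed by ρ on both h as above and g. -/

import Mathlib

noncomputable section

abbrev Mat2 : Type := Matrix (Fin 2) (Fin 2) ℂ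

/-- The special unitary group SU(2), as a set of matrices. -/
def SU2 : Set Mat2 := {A | A * A.conjTranspose = 1 ∧ A.det = 1}

/-- The block-diagonal matrix diag(A, B, c) ∈ U(5). -/
def bd5 (A B : Mat2) (c : ℂ) : Matrix (Fin 5) (Fin 5) ℂ :=
  !![A 0 0, A 0 1, 0, 0, 0;
     A 1 0, A 1 1, 0, 0, 0;
     0, 0, B 0 0, B 0 1, 0;
     0, 0, B 1 0, B 1 1, 0;
     0, 0, 0, 0, c]

/-- The ℤ₄-generator g ∈ U(5): ge₁ = e₃, ge₂ = −e₄, ge₃ = e₁, ge₄ = e₂, ge₅ = e₅. -/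
def g5 : Matrix (Fin 5) (Fin 5) ℂ :=
  !![0, 0, 1, 0, 0;
     0, 0, 0, 1, 0;
     1, 0, 0, 0, 0;
     0, -1, 0, 0, 0;
     0, 0, 0, 0, 1]

/-- The representation ρ(g)w := det(g)·(ḡw) of U(5) on ℂ⁵. -/
def rho9 (g : Matrix (Fin 5) (Fin 5) ℂ) (w : Fin 5 → ℂ) : Fin 5 → ℂ :=
  g.det • (g.map (starRingEnd ℂ)).mulVec w

/-- The standard basis of ℂ⁵ (e₅ = eV 4). -/
def eV (i : Fin 5) : Fin 5 → ℂ := Pi.single i 1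

/-!
Take `h = diag(1, 1, -1)` among the `diag(A, B, c)`: then `ρ(h)` is `-1` on `e₁, …, e₄` and `+1` on
`e₅`, so an invariant vector lies on `ℂ e₅`. Conversely `ρ(diag(A, B, c)) e₅ = det A · det B · c c̄ · e₅ = e₅`.
Since `det g = -1` and `ḡ e₅ = e₅`, `ρ(g)` acts on that line by `-1`, leaving only `0` fixed.
-/

def K0Invariants : Set (Fin 5 → ℂ) :=
  {w | ∀ (A B : Mat2) (c : ℂ), A ∈ SU2 → B ∈ SU2 → ‖c‖ = 1 → rho9 (bd5 A B c) w = w}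

lemma rho9_smul (g : Matrix (Fin 5) (Fin 5) ℂ) (t : ℂ) (w : Fin 5 → ℂ) :
    rho9 g (t • w) = t • rho9 g w := by
  rw [rho9, rho9, Matrix.mulVec_smul, smul_comm]

lemma one_mem_SU2 : (1 : Mat2) ∈ SU2 := by
  simp [SU2]

lemma det_bd5 (A B : Mat2) (c : ℂ) : (bd5 A B c).det = A.det * B.det * c := by
  simp [bd5, Matrix.det_succ_row_zero, Fin.sum_univ_succ,
    show (1 : Fin 5).succAbove 2 = 3 from rfl, show (1 : Fin 5).succAbove 3 = 4 from rfl]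
  ring

lemma det_g5 : g5.det = -1 := by
  simp [g5, Matrix.det_succ_row_zero, Fin.sum_univ_succ,
    show (2 : Fin 5).succAbove (2 : Fin 4) = 3 from rfl,
    show (2 : Fin 5).succAbove (3 : Fin 4) = 4 from rfl,
    show (2 : Fin 4).succAbove (2 : Fin 3) = 3 from rfl,
    show (3 : Fin 4).succAbove (2 : Fin 3) = 2 from rfl]

lemma rho9_bd5_one_one_neg_one (w : Fin 5 → ℂ) :
    rho9 (bd5 1 1 (-1)) w = ![-w 0, -w 1, -w 2, -w 3, w 4] := by
  ext i
  rw [rho9, det_bd5]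
  fin_cases i <;> simp [bd5, Matrix.mulVec, dotProduct, Fin.sum_univ_succ]

lemma rho9_bd5_eV_four (A B : Mat2) (c : ℂ) :
    rho9 (bd5 A B c) (eV 4) = (A.det * B.det * Complex.normSq c) • eV 4 := by
  ext i
  rw [rho9, det_bd5]
  fin_cases i <;> simp [bd5, eV, ← Complex.mul_conj]
  ring

lemma rho9_bd5_eV_four_of_mem {A B : Mat2} {c : ℂ} (hA : A ∈ SU2) (hB : B ∈ SU2) (hc : ‖c‖ = 1) :
    rho9 (bd5 A B c) (eV 4) = eV 4 := by
  rw [rho9_bd5_eV_four, hA.2, hB.2, Complex.normSq_eq_norm_sq, hc]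
  simp

lemma rho9_g5_eV_four : rho9 g5 (eV 4) = -eV 4 := by
  ext i
  rw [rho9, det_g5]
  fin_cases i <;> simp [g5, eV]

lemma K0Invariants_eq_range : K0Invariants = Set.range (fun t : ℂ => t • eV 4) := by
  ext w
  constructor
  · intro hw
    have hfix := rho9_bd5_one_one_neg_one w ▸ hw 1 1 (-1) one_mem_SU2 one_mem_SU2 (by simp)
    have hvanish (i : Fin 5) (hi : i ≠ 4) : w i = 0 := by
      have hi' := congrFun hfix i
      fin_cases i
      all_goals first
        | exact absurd rfl hi
        | simpa [neg_eq_self] using hi'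
    refine ⟨w 4, funext fun i => ?_⟩
    by_cases hi : i = 4
    · simp [hi, eV]
    · simp [eV, hi, hvanish i hi]
  · rintro ⟨t, rfl⟩ A B c hA hB hc
    rw [rho9_smul, rho9_bd5_eV_four_of_mem hA hB hc]

theorem statement9 :
    ({w : Fin 5 → ℂ | ∀ (A B : Mat2) (c : ℂ), A ∈ SU2 → B ∈ SU2 → ‖c‖ = 1 →
        rho9 (bd5 A B c) w = w}
      = Set.range (fun t : ℂ => t • eV 4)) ∧
    rho9 g5 (eV 4) = -eV 4 ∧
    ({w : Fin 5 → ℂ | (∀ (A B : Mat2) (c : ℂ), A ∈ SU2 → B ∈ SU2 → ‖c‖ = 1 →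
        rho9 (bd5 A B c) w = w) ∧ rho9 g5 w = w}
      = {0}) := by
  refine ⟨K0Invariants_eq_range, rho9_g5_eV_four, Set.eq_singleton_iff_unique_mem.2 ⟨?_, ?_⟩⟩
  · exact ⟨fun A B c _ _ _ => by simp [rho9], by simp [rho9]⟩
  · rintro w ⟨hw, hg⟩
    obtain ⟨t, rfl⟩ : w ∈ Set.range (fun t : ℂ => t • eV 4) := K0Invariants_eq_range ▸ hw
    rwa [rho9_smul, rho9_g5_eV_four, smul_neg, neg_eq_self] at hg

end
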